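/- Let R be a commutative ring and s₁, …, s_d ∈ R a finite collection of elements generating the unit ideal. Then for any R-module M the Čech coresolution 0 → M → ⊕ᵢ M[sᵢ⁻¹] → ⊕_{i<j} M[sᵢ⁻¹ s_j⁻¹] → ⋯ → M[s₁⁻¹⋯s_d⁻¹] → 0 is an exact sequence of R-modules. -/

import Mathlib

open Finset Function
section Helpers
variable {d : ℕ}

lemma sgn_aux (m n : ℕ) (h : (m + n) % 2 = 1) : (-1:ℤ)^m = -(-1:ℤ)^n := by
  have h1 : (-1:ℤ)^(m+n) = -1 := Odd.neg_one_pow (Nat.odd_iff.2 h)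
  calc (-1:ℤ)^m = (-1:ℤ)^m * ((-1:ℤ)^(n+n)) := by
        rw [Even.neg_one_pow ⟨n, rfl⟩, mul_one]
      _ = (-1:ℤ)^(m+n) * (-1:ℤ)^n := by rw [← pow_add, ← pow_add]; ring_nf
      _ = -(-1:ℤ)^n := by rw [h1, neg_one_mul]

lemma card_filter_erase (t : Finset (Fin d)) {j : Fin d} (hj : j ∈ t) (i : Fin d) :
    (t.filter (fun x => x < i)).card =
      ((t.erase j).filter (fun x => x < i)).card + (if j < i then 1 else 0) := by
  rw [Finset.filter_erase]
  by_cases h : j < i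
  · have hmem : j ∈ t.filter (fun x => x < i) := Finset.mem_filter.2 ⟨hj, h⟩
    rw [if_pos h, Finset.card_erase_of_mem hmem]
    have hpos : 0 < (t.filter (fun x => x < i)).card := Finset.card_pos.2 ⟨j, hmem⟩
    omega
  · have hmem : j ∉ t.filter (fun x => x < i) := fun hc => h (Finset.mem_filter.1 hc).2
    rw [if_neg h, Finset.erase_eq_of_notMem hmem, add_zero]

lemma card_filter_insert (t : Finset (Fin d)) {i0 : Fin d} (h : i0 ∉ t) (i : Fin d) :
    ((insert i0 t).filter (fun x => x < i)).card =
      (t.filter (fun x => x < i)).card + (if i0 < i then 1 else 0) := by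
  rw [Finset.filter_insert]
  by_cases h' : i0 < i
  · rw [if_pos h', if_pos h',
      Finset.card_insert_of_notMem (fun hc => h (Finset.mem_filter.1 hc).1)]
  · rw [if_neg h', if_neg h', add_zero]

lemma pair_filter_lo {a b : Fin d} (hab : a < b) :
    ({a, b} : Finset (Fin d)).filter (fun x => x < a) = ∅ := by
  ext i
  simp only [Finset.mem_filter, Finset.mem_insert, Finset.mem_singleton,
    Finset.notMem_empty, iff_false, not_and]
  rintro (rfl | rfl)
  · exact lt_irrefl _
  · exact fun hc => absurd hab (not_lt_of_gt hc)

lemma pair_filter_hi {a b : Fin d} (hab : a < b) :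
    ({a, b} : Finset (Fin d)).filter (fun x => x < b) = {a} := by
  ext i
  simp only [Finset.mem_filter, Finset.mem_insert, Finset.mem_singleton]
  constructor
  · rintro ⟨rfl | rfl, h⟩
    · rfl
    · exact absurd h (lt_irrefl _)
  · rintro rfl; exact ⟨Or.inl rfl, hab⟩

lemma sgn_pair_mul {a b : Fin d} (hab : a ≠ b) :
    ((-1:ℤ) ^ (({a,b} : Finset (Fin d)).filter (fun x => x < a)).card) *
      ((-1:ℤ) ^ (({a,b} : Finset (Fin d)).filter (fun x => x < b)).card) = -1 := by
  rcases lt_or_gt_of_ne hab with h | h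
  · rw [pair_filter_lo h, pair_filter_hi h]; simp
  · rw [Finset.pair_comm a b, pair_filter_lo h, pair_filter_hi h]
    simp [mul_comm]

end Helpers

section Abstract

variable {R : Type} [CommRing R] {d : ℕ}
variable {M₀ : Type} [AddCommGroup M₀] [Module R M₀]
variable {N : Finset (Fin d) → Type} [∀ t, AddCommGroup (N t)] [∀ t, Module R (N t)]

/-- sign -/
def cechSgn (j : Fin d) (t : Finset (Fin d)) : ℤ := (-1) ^ ((t.filter (fun i => i < j)).card)

/-- extension by zero -/
def cechExt {k : ℕ} (ω : ∀ t : {t : Finset (Fin d) // t.card = k}, N t.1)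
    (u : Finset (Fin d)) : N u :=
  if h : u.card = k then ω ⟨u, h⟩ else 0

lemma cechExt_of_ne {k : ℕ} (ω : ∀ t : {t : Finset (Fin d) // t.card = k}, N t.1)
    {u : Finset (Fin d)} (h : ¬ u.card = k) : cechExt ω u = 0 := dif_neg h

variable (ρ₀ : ∀ t : Finset (Fin d), M₀ →ₗ[R] N t)
variable (ρ : ∀ t t' : Finset (Fin d), N t →ₗ[R] N t')

/-- the augmentation -/
def cechE : M₀ →ₗ[R] ∀ t : {t : Finset (Fin d) // t.card = 1}, N t.1 :=
  LinearMap.pi fun t => ρ₀ t.1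

lemma cechE_apply (x : M₀) (t : {t : Finset (Fin d) // t.card = 1}) :
    cechE ρ₀ x t = ρ₀ t.1 x := rfl

/-- the differential -/
noncomputable def cechD (k : ℕ) :
    (∀ t : {t : Finset (Fin d) // t.card = k + 1}, N t.1) →ₗ[R]
      (∀ t : {t : Finset (Fin d) // t.card = k + 2}, N t.1) where
  toFun ω t := ∑ j ∈ t.1.attach,
    ((-1 : ℤ) ^ ((t.1.filter (fun i => i < j.1)).card)) •
      ρ (t.1.erase j.1) t.1 (ω ⟨t.1.erase j.1, by
        simp [Finset.card_erase_of_mem j.2, t.2]⟩)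
  map_add' ω ω' := by
    funext t
    simp [Pi.add_apply, smul_add, Finset.sum_add_distrib]
  map_smul' r ω := by
    funext t
    simp [Finset.smul_sum, smul_comm r]

lemma cechD_apply (k : ℕ) (ω : ∀ t : {t : Finset (Fin d) // t.card = k + 1}, N t.1)
    (t : {t : Finset (Fin d) // t.card = k + 2}) :
    cechD ρ k ω t = ∑ j : Fin d,
      cechSgn j t.1 • ρ (t.1.erase j) t.1 (cechExt ω (t.1.erase j)) := by
  have h0 : ∀ j : Fin d, j ∉ t.1 →
      cechSgn j t.1 • ρ (t.1.erase j) t.1 (cechExt ω (t.1.erase j)) = 0 := by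
    intro j hj
    have hne : ¬ ((t.1.erase j).card = k + 1) := by
      rw [Finset.erase_eq_of_notMem hj, t.2]; omega
    have : cechExt (N := N) ω (t.1.erase j) = 0 := by
      rw [cechExt, dif_neg hne]
    rw [this, map_zero, smul_zero]
  rw [← Finset.sum_subset (Finset.subset_univ t.1) (fun j _ hj => h0 j hj),
    ← Finset.sum_attach t.1 (fun j => cechSgn j t.1 • ρ (t.1.erase j) t.1 (cechExt ω (t.1.erase j)))]
  simp only [cechD, LinearMap.coe_mk, AddHom.coe_mk]
  refine Finset.sum_congr rfl fun j _ => ?_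
  have hc : (t.1.erase j.1).card = k + 1 := by
    simp [Finset.card_erase_of_mem j.2, t.2]
  rw [cechSgn, cechExt, dif_pos hc]

theorem cech_dd
    (hfun : ∀ t t' t'' : Finset (Fin d), t ⊆ t' → t' ⊆ t'' →
      ∀ x, ρ t' t'' (ρ t t' x) = ρ t t'' x)
    (k : ℕ) (ω : ∀ t : {t : Finset (Fin d) // t.card = k + 1}, N t.1) :
    cechD ρ (k + 1) (cechD ρ k ω) = 0 := by
  funext u
  rw [cechD_apply, Pi.zero_apply]
  have hcu : u.1.card = k + 3 := u.2
  have hterm : ∀ j : Fin d,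
      cechSgn j u.1 • ρ (u.1.erase j) u.1 (cechExt (cechD ρ k ω) (u.1.erase j)) =
      ∑ j' : Fin d, (cechSgn j u.1 * cechSgn j' (u.1.erase j)) •
        ρ ((u.1.erase j).erase j') u.1 (cechExt ω ((u.1.erase j).erase j')) := by
    intro j
    by_cases hj : j ∈ u.1
    · have hc : (u.1.erase j).card = k + 2 := by
        rw [Finset.card_erase_of_mem hj, hcu]; omega
      have hext : cechExt (N := N) (cechD ρ k ω) (u.1.erase j)
          = cechD ρ k ω ⟨u.1.erase j, hc⟩ := by
        rw [cechExt, dif_pos hc]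
      rw [hext, cechD_apply ρ k ω ⟨u.1.erase j, hc⟩, map_sum, Finset.smul_sum]
      refine Finset.sum_congr rfl fun j' _ => ?_
      rw [map_zsmul, smul_smul,
        hfun _ _ _ (Finset.erase_subset _ _) (Finset.erase_subset _ _)]
    · have h1 : cechExt (N := N) (cechD ρ k ω) (u.1.erase j) = 0 := by
        refine cechExt_of_ne _ ?_
        rw [Finset.erase_eq_of_notMem hj, hcu]; omega
      rw [h1, map_zero, smul_zero]
      refine (Finset.sum_eq_zero fun j' _ => ?_).symm
      have h2 : cechExt (N := N) ω ((u.1.erase j).erase j') = 0 := by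
        refine cechExt_of_ne _ ?_
        rw [Finset.erase_eq_of_notMem hj]
        have := Finset.pred_card_le_card_erase (s := u.1) (a := j')
        omega
      rw [h2, map_zero, smul_zero]
  rw [Finset.sum_congr rfl (fun j _ => hterm j), ← Fintype.sum_prod_type']
  refine Finset.sum_ninvolution (fun p => (p.2, p.1)) ?_ ?_ (fun _ => Finset.mem_univ _)
    (fun p => rfl)
  · -- cancellation
    rintro ⟨j, j'⟩
    dsimp only
    by_cases hv : ((u.1.erase j).erase j').card = k + 1
    · -- genuine pair
      have hj : j ∈ u.1 := by
        by_contra hj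
        rw [Finset.erase_eq_of_notMem hj] at hv
        have := Finset.pred_card_le_card_erase (s := u.1) (a := j')
        omega
      have hj' : j' ∈ u.1.erase j := by
        by_contra hj'
        rw [Finset.erase_eq_of_notMem hj'] at hv
        rw [Finset.card_erase_of_mem hj] at hv
        omega
      have hne : j' ≠ j := (Finset.mem_erase.1 hj').1
      have hj'u : j' ∈ u.1 := (Finset.mem_erase.1 hj').2
      have hju : j ∈ u.1.erase j' := Finset.mem_erase.2 ⟨fun h => hne h.symm, hj⟩
      have hcomm : (u.1.erase j).erase j' = (u.1.erase j').erase j :=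
        Finset.erase_right_comm
      have hsgn : cechSgn j u.1 * cechSgn j' (u.1.erase j)
          = -(cechSgn j' u.1 * cechSgn j (u.1.erase j')) := by
        simp only [cechSgn, ← pow_add]
        have e1 := card_filter_erase u.1 hj j'
        have e2 := card_filter_erase u.1 hj'u j
        refine sgn_aux _ _ ?_
        rcases lt_or_gt_of_ne hne with h | h
        · simp only [if_pos h, if_neg (not_lt_of_gt h)] at e1 e2
          omega
        · have h' : j < j' := h
          simp only [if_pos h', if_neg (not_lt_of_gt h')] at e1 e2
          omega
      rw [hsgn, hcomm, neg_smul]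
      exact neg_add_cancel _
    · -- extension vanishes
      have h2 : cechExt (N := N) ω ((u.1.erase j).erase j') = 0 := cechExt_of_ne _ hv
      have h3 : cechExt (N := N) ω ((u.1.erase j').erase j) = 0 := by
        rw [← Finset.erase_right_comm]; exact h2
      rw [h2, h3, map_zero, map_zero, smul_zero, smul_zero, add_zero]
  · -- g_ne
    rintro ⟨j, j'⟩ hf hswap
    have hjj : j' = j := congrArg Prod.fst hswap
    apply hf
    rw [hjj]
    have hv : ¬ ((u.1.erase j).erase j).card = k + 1 := by
      rw [Finset.erase_idem]
      by_cases hj : j ∈ u.1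
      · rw [Finset.card_erase_of_mem hj]; omega
      · rw [Finset.erase_eq_of_notMem hj]; omega
    rw [cechExt_of_ne _ hv, map_zero, smul_zero]

theorem cech_de
    (hfun₀ : ∀ t t' : Finset (Fin d), t ⊆ t' → ∀ x, ρ t t' (ρ₀ t x) = ρ₀ t' x)
    (x : M₀) : cechD ρ 0 (cechE ρ₀ x) = 0 := by
  funext u
  rw [cechD_apply, Pi.zero_apply]
  have hcu : u.1.card = 2 := u.2
  obtain ⟨a, b, hab, hu⟩ := Finset.card_eq_two.1 hcu
  have hterm : ∀ j : Fin d, j ∈ u.1 →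
      cechSgn j u.1 • ρ (u.1.erase j) u.1 (cechExt (cechE ρ₀ x) (u.1.erase j))
        = cechSgn j u.1 • ρ₀ u.1 x := by
    intro j hj
    have hc : (u.1.erase j).card = 1 := by rw [Finset.card_erase_of_mem hj, hcu]
    rw [cechExt, dif_pos hc, cechE_apply, hfun₀ _ _ (Finset.erase_subset _ _)]
  have h0 : ∀ j : Fin d, j ∉ u.1 →
      cechSgn j u.1 • ρ (u.1.erase j) u.1 (cechExt (cechE ρ₀ x) (u.1.erase j)) = 0 := by
    intro j hj
    have hne : ¬ ((u.1.erase j).card = 1) := by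
      rw [Finset.erase_eq_of_notMem hj, hcu]; omega
    rw [cechExt_of_ne _ hne, map_zero, smul_zero]
  rw [← Finset.sum_subset (Finset.subset_univ u.1) (fun j _ hj => h0 j hj),
    Finset.sum_congr rfl hterm, ← Finset.sum_smul, hu]
  rw [Finset.sum_pair hab]
  have : cechSgn a u.1 + cechSgn b u.1 = 0 := by
    rw [hu]
    simp only [cechSgn]
    rcases lt_or_gt_of_ne hab with h | h
    · rw [pair_filter_lo h, pair_filter_hi h]; simp
    · rw [Finset.pair_comm a b, pair_filter_lo h, pair_filter_hi h]; simp [add_comm]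
  rw [hu] at this
  rw [this, zero_smul]


section Homotopy

variable (i0 : Fin d) {k : ℕ}

lemma sgn_sq (j : Fin d) (t : Finset (Fin d)) : cechSgn j t * cechSgn j t = 1 := by
  rw [cechSgn, ← pow_add]
  exact Even.neg_one_pow ⟨_, rfl⟩

theorem cech_homotopy_A
    (ω : ∀ t : {t : Finset (Fin d) // t.card = k + 2}, N t.1)
    (η : ∀ t : {t : Finset (Fin d) // t.card = k + 1}, N t.1)
    (hη0 : ∀ tt, i0 ∈ tt.1 → η tt = 0)
    (hηkey : ∀ (v : Finset (Fin d)) (hv : i0 ∉ v) (hcv : v.card = k + 1)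
      (pf : (insert i0 v).card = k + 2),
      ρ v (insert i0 v) (η ⟨v, hcv⟩) =
        ((-1:ℤ)^((v.filter (fun i => i < i0)).card)) • ω ⟨insert i0 v, pf⟩)
    (v : Finset (Fin d)) (hv : i0 ∉ v) (hcv : v.card = k + 1)
    (pf : (insert i0 v).card = k + 2) :
    cechD ρ k η ⟨insert i0 v, pf⟩ = ω ⟨insert i0 v, pf⟩ := by
  rw [cechD_apply]
  rw [Finset.sum_eq_single i0]
  · -- main term
    show cechSgn i0 (insert i0 v) •
      ρ ((insert i0 v).erase i0) (insert i0 v) (cechExt η ((insert i0 v).erase i0)) = _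
    rw [Finset.erase_insert hv]
    have hext : cechExt (N := N) η v = η ⟨v, hcv⟩ := dif_pos hcv
    rw [hext, hηkey v hv hcv pf, smul_smul]
    have hsgn : cechSgn i0 (insert i0 v) = (-1:ℤ)^((v.filter (fun i => i < i0)).card) := by
      rw [cechSgn, card_filter_insert v hv i0, if_neg (lt_irrefl i0), add_zero]
    rw [hsgn, ← pow_add, Even.neg_one_pow ⟨_, rfl⟩, one_smul]
  · -- other terms vanish
    intro b _ hb
    by_cases hbv : b ∈ insert i0 v
    · have hbv' : b ∈ v := by
        rcases Finset.mem_insert.1 hbv with h | h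
        · exact absurd h hb
        · exact h
      have hcb : ((insert i0 v).erase b).card = k + 1 := by
        rw [Finset.card_erase_of_mem hbv, pf]; omega
      have hmem : i0 ∈ (insert i0 v).erase b :=
        Finset.mem_erase.2 ⟨fun h => hb h.symm, Finset.mem_insert_self _ _⟩
      have hext : cechExt (N := N) η ((insert i0 v).erase b)
          = η ⟨(insert i0 v).erase b, hcb⟩ := dif_pos hcb
      rw [hext, hη0 _ hmem, map_zero, smul_zero]
    · have : ¬ (((insert i0 v).erase b).card = k + 1) := by
        rw [Finset.erase_eq_of_notMem hbv, pf]; omega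
      rw [cechExt_of_ne _ this, map_zero, smul_zero]
  · intro h
    exact absurd (Finset.mem_univ i0) h

theorem cech_homotopy_B
    (hfun : ∀ t t' t'' : Finset (Fin d), t ⊆ t' → t' ⊆ t'' →
      ∀ x, ρ t' t'' (ρ t t' x) = ρ t t'' x)
    (hbij : ∀ t : Finset (Fin d), i0 ∉ t → Function.Bijective (ρ t (insert i0 t)))
    (ω : ∀ t : {t : Finset (Fin d) // t.card = k + 2}, N t.1)
    (hω : cechD ρ (k + 1) ω = 0)
    (η : ∀ t : {t : Finset (Fin d) // t.card = k + 1}, N t.1)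
    (hηkey : ∀ (v : Finset (Fin d)) (hv : i0 ∉ v) (hcv : v.card = k + 1)
      (pf : (insert i0 v).card = k + 2),
      ρ v (insert i0 v) (η ⟨v, hcv⟩) =
        ((-1:ℤ)^((v.filter (fun i => i < i0)).card)) • ω ⟨insert i0 v, pf⟩)
    (u : {t : Finset (Fin d) // t.card = k + 2}) (hu : i0 ∉ u.1) :
    cechD ρ k η u = ω u := by
  obtain ⟨t, ht⟩ := u
  dsimp only at hu ⊢
  apply (hbij t hu).1
  have hcu' : (insert i0 t).card = k + 3 := by
    rw [Finset.card_insert_of_notMem hu, ht]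
  have hD := congrFun hω ⟨insert i0 t, hcu'⟩
  rw [cechD_apply, Pi.zero_apply] at hD
  rw [← Finset.add_sum_erase _ _ (Finset.mem_univ i0)] at hD
  rw [Finset.erase_insert hu] at hD
  have hext : cechExt (N := N) ω t = ω ⟨t, ht⟩ := dif_pos ht
  rw [hext] at hD
  have ha : cechSgn i0 (insert i0 t) • ρ t (insert i0 t) (ω ⟨t, ht⟩)
      = - ∑ j ∈ Finset.univ.erase i0, cechSgn j (insert i0 t) •
          ρ ((insert i0 t).erase j) (insert i0 t) (cechExt ω ((insert i0 t).erase j)) :=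
    eq_neg_of_add_eq_zero_left hD
  have hgoal : ρ t (insert i0 t) (ω ⟨t, ht⟩)
      = ∑ j ∈ Finset.univ.erase i0, (-(cechSgn i0 (insert i0 t) * cechSgn j (insert i0 t))) •
          ρ ((insert i0 t).erase j) (insert i0 t) (cechExt ω ((insert i0 t).erase j)) := by
    calc ρ t (insert i0 t) (ω ⟨t, ht⟩)
        = (cechSgn i0 (insert i0 t) * cechSgn i0 (insert i0 t)) •
            ρ t (insert i0 t) (ω ⟨t, ht⟩) := by rw [sgn_sq, one_smul]
      _ = cechSgn i0 (insert i0 t) • (cechSgn i0 (insert i0 t) •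
            ρ t (insert i0 t) (ω ⟨t, ht⟩)) := by rw [mul_smul]
      _ = cechSgn i0 (insert i0 t) • (- ∑ j ∈ Finset.univ.erase i0,
            cechSgn j (insert i0 t) • ρ ((insert i0 t).erase j) (insert i0 t)
              (cechExt ω ((insert i0 t).erase j))) := by rw [ha]
      _ = ∑ j ∈ Finset.univ.erase i0, (-(cechSgn i0 (insert i0 t) * cechSgn j (insert i0 t))) •
            ρ ((insert i0 t).erase j) (insert i0 t)
              (cechExt ω ((insert i0 t).erase j)) := by
          rw [smul_neg, Finset.smul_sum, ← Finset.sum_neg_distrib]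
          refine Finset.sum_congr rfl fun j _ => ?_
          rw [smul_smul, neg_smul]
  rw [cechD_apply, map_sum, hgoal]
  rw [← Finset.add_sum_erase _ _ (Finset.mem_univ i0)]
  have hz : ρ t (insert i0 t)
      (cechSgn i0 t • ρ (t.erase i0) t (cechExt η (t.erase i0))) = 0 := by
    have : ¬ ((t.erase i0).card = k + 1) := by
      rw [Finset.erase_eq_of_notMem hu, ht]; omega
    rw [cechExt_of_ne _ this, map_zero, smul_zero, map_zero]
  rw [hz, zero_add]
  refine Finset.sum_congr rfl fun j hj => ?_
  have hji0 : j ≠ i0 := (Finset.mem_erase.1 hj).1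
  by_cases hjt : j ∈ t
  · -- genuine term
    have hi0tj : i0 ∉ t.erase j := fun h => hu (Finset.mem_of_mem_erase h)
    have hctj : (t.erase j).card = k + 1 := by
      rw [Finset.card_erase_of_mem hjt, ht]; omega
    have hextη : cechExt (N := N) η (t.erase j) = η ⟨t.erase j, hctj⟩ := dif_pos hctj
    have hcw : (insert i0 (t.erase j)).card = k + 2 := by
      rw [Finset.card_insert_of_notMem hi0tj, hctj]
    have herase : (insert i0 t).erase j = insert i0 (t.erase j) :=
      Finset.erase_insert_of_ne (Ne.symm hji0)
    rw [herase, hextη]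
    have hextω : cechExt (N := N) ω (insert i0 (t.erase j))
        = ω ⟨insert i0 (t.erase j), hcw⟩ := dif_pos hcw
    rw [hextω, map_zsmul]
    -- compose maps
    rw [hfun (t.erase j) t (insert i0 t) (Finset.erase_subset _ _)
      (Finset.subset_insert _ _) (η ⟨t.erase j, hctj⟩)]
    rw [← hfun (t.erase j) (insert i0 (t.erase j)) (insert i0 t)
      (Finset.subset_insert _ _)
      (Finset.insert_subset_insert _ (Finset.erase_subset _ _)) (η ⟨t.erase j, hctj⟩)]
    rw [hηkey (t.erase j) hi0tj hctj hcw, map_zsmul, smul_smul]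
    congr 1
    -- sign identity
    have e1 := card_filter_insert t hu j
    have e2 := card_filter_insert t hu i0
    have e3 := card_filter_erase t hjt i0
    rw [if_neg (lt_irrefl i0), add_zero] at e2
    simp only [cechSgn, ← pow_add]
    refine sgn_aux _ _ ?_
    rcases lt_or_gt_of_ne hji0 with h | h
    · simp only [if_pos h, if_neg (not_lt_of_gt h)] at e1 e3
      omega
    · have h' : i0 < j := h
      simp only [if_pos h', if_neg (not_lt_of_gt h')] at e1 e3
      omega
  · -- vanishing term
    have hjins : j ∉ insert i0 t := by
      intro h
      rcases Finset.mem_insert.1 h with h | h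
      · exact hji0 h
      · exact hjt h
    have h1 : ¬ ((t.erase j).card = k + 1) := by
      rw [Finset.erase_eq_of_notMem hjt, ht]; omega
    have h2 : ¬ (((insert i0 t).erase j).card = k + 2) := by
      rw [Finset.erase_eq_of_notMem hjins, hcu']; omega
    rw [cechExt_of_ne _ h1, cechExt_of_ne _ h2, map_zero, map_zero, smul_zero,
      map_zero, smul_zero]

theorem cech_exact_higher
    (hfun : ∀ t t' t'' : Finset (Fin d), t ⊆ t' → t' ⊆ t'' →
      ∀ x, ρ t' t'' (ρ t t' x) = ρ t t'' x)
    (hbij : ∀ t : Finset (Fin d), i0 ∉ t → Function.Bijective (ρ t (insert i0 t)))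
    (k : ℕ) : Function.Exact (cechD ρ k) (cechD ρ (k + 1)) := by
  intro ω
  constructor
  · intro hω
    classical
    let η : ∀ tt : {t : Finset (Fin d) // t.card = k + 1}, N tt.1 := fun tt =>
      if h : i0 ∈ tt.1 then 0
      else ((-1:ℤ)^((tt.1.filter (fun i => i < i0)).card)) •
        (LinearEquiv.ofBijective (ρ tt.1 (insert i0 tt.1)) (hbij tt.1 h)).symm
          (ω ⟨insert i0 tt.1, by rw [Finset.card_insert_of_notMem h, tt.2]⟩)
    have hη0 : ∀ tt, i0 ∈ tt.1 → η tt = 0 := fun tt h => dif_pos h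
    have hηkey : ∀ (v : Finset (Fin d)) (hv : i0 ∉ v) (hcv : v.card = k + 1)
        (pf : (insert i0 v).card = k + 2),
        ρ v (insert i0 v) (η ⟨v, hcv⟩) =
          ((-1:ℤ)^((v.filter (fun i => i < i0)).card)) • ω ⟨insert i0 v, pf⟩ := by
      intro v hv hcv pf
      have hd : η ⟨v, hcv⟩ = ((-1:ℤ)^((v.filter (fun i => i < i0)).card)) •
          (LinearEquiv.ofBijective (ρ v (insert i0 v)) (hbij v hv)).symm
            (ω ⟨insert i0 v, pf⟩) := dif_neg hv
      rw [hd, map_zsmul]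
      congr 1
      have h2 := (LinearEquiv.ofBijective (ρ v (insert i0 v)) (hbij v hv)).apply_symm_apply
        (ω ⟨insert i0 v, pf⟩)
      rw [LinearEquiv.ofBijective_apply] at h2
      exact h2
    refine ⟨η, ?_⟩
    funext u
    by_cases hu : i0 ∈ u.1
    · obtain ⟨t, ht⟩ := u
      have hvne : i0 ∉ t.erase i0 := Finset.notMem_erase _ _
      have hcv : (t.erase i0).card = k + 1 := by
        rw [Finset.card_erase_of_mem hu, ht]; omega
      have pf : (insert i0 (t.erase i0)).card = k + 2 := by
        rw [Finset.insert_erase hu]; exact ht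
      have h := cech_homotopy_A ρ i0 ω η hη0 hηkey (t.erase i0) hvne hcv pf
      have hidx : (⟨t, ht⟩ : {t : Finset (Fin d) // t.card = k + 2})
          = ⟨insert i0 (t.erase i0), pf⟩ := Subtype.ext (Finset.insert_erase hu).symm
      rw [hidx]
      exact h
    · exact cech_homotopy_B ρ i0 hfun hbij ω hω η hηkey u hu
  · rintro ⟨η, rfl⟩
    exact cech_dd ρ hfun k η

theorem cech_e_inj (hbij₀ : Function.Bijective (ρ₀ ({i0} : Finset (Fin d)))) :
    Function.Injective (cechE ρ₀) := by
  intro x y hxy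
  apply hbij₀.1
  exact congrFun hxy ⟨{i0}, Finset.card_singleton i0⟩

theorem cech_exact_zero
    (hfun : ∀ t t' t'' : Finset (Fin d), t ⊆ t' → t' ⊆ t'' →
      ∀ x, ρ t' t'' (ρ t t' x) = ρ t t'' x)
    (hfun₀ : ∀ t t' : Finset (Fin d), t ⊆ t' → ∀ x, ρ t t' (ρ₀ t x) = ρ₀ t' x)
    (hbij : ∀ t : Finset (Fin d), i0 ∉ t → Function.Bijective (ρ t (insert i0 t)))
    (hbij₀ : Function.Bijective (ρ₀ ({i0} : Finset (Fin d)))) :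
    Function.Exact (cechE ρ₀) (cechD ρ 0) := by
  intro ω
  constructor
  · intro hω
    refine ⟨(LinearEquiv.ofBijective (ρ₀ ({i0} : Finset (Fin d))) hbij₀).symm
      (ω ⟨{i0}, Finset.card_singleton i0⟩), ?_⟩
    set x := (LinearEquiv.ofBijective (ρ₀ ({i0} : Finset (Fin d))) hbij₀).symm
      (ω ⟨{i0}, Finset.card_singleton i0⟩) with hxdef
    have h1 : ρ₀ ({i0} : Finset (Fin d)) x = ω ⟨{i0}, Finset.card_singleton i0⟩ := by
      have h2 := (LinearEquiv.ofBijective (ρ₀ ({i0} : Finset (Fin d))) hbij₀).apply_symm_apply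
        (ω ⟨{i0}, Finset.card_singleton i0⟩)
      rw [LinearEquiv.ofBijective_apply] at h2
      exact h2
    funext tt
    obtain ⟨t, ht⟩ := tt
    obtain ⟨j, rfl⟩ := Finset.card_eq_one.1 ht
    show ρ₀ {j} x = ω ⟨{j}, ht⟩
    by_cases hj : j = i0
    · subst hj
      exact h1
    · have hij : i0 ∉ ({j} : Finset (Fin d)) :=
        fun h => hj (Finset.mem_singleton.1 h).symm
      apply (hbij {j} hij).1
      rw [hfun₀ {j} (insert i0 {j}) (Finset.subset_insert _ _) x]
      rw [← hfun₀ {i0} (insert i0 {j})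
        (Finset.singleton_subset_iff.2 (Finset.mem_insert_self _ _)) x]
      rw [h1]
      -- now use the cocycle relation
      have hcu : (insert i0 ({j} : Finset (Fin d))).card = 2 := by
        rw [Finset.card_insert_of_notMem hij, Finset.card_singleton]
      have hD := congrFun hω ⟨insert i0 {j}, hcu⟩
      rw [cechD_apply, Pi.zero_apply] at hD
      have h0 : ∀ j' : Fin d, j' ∉ insert i0 ({j} : Finset (Fin d)) →
          cechSgn j' (insert i0 ({j} : Finset (Fin d))) •
            ρ ((insert i0 ({j} : Finset (Fin d))).erase j')
              (insert i0 ({j} : Finset (Fin d)))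
            (cechExt ω ((insert i0 ({j} : Finset (Fin d))).erase j')) = 0 := by
        intro j' hj'
        have : ¬ (((insert i0 ({j} : Finset (Fin d))).erase j').card = 1) := by
          rw [Finset.erase_eq_of_notMem hj', hcu]; omega
        rw [cechExt_of_ne _ this, map_zero, smul_zero]
      rw [← Finset.sum_subset (Finset.subset_univ (insert i0 ({j} : Finset (Fin d))))
        (fun j' _ hj' => h0 j' hj'), Finset.sum_insert hij, Finset.sum_singleton] at hD
      have he1 : (insert i0 ({j} : Finset (Fin d))).erase i0 = {j} :=
        Finset.erase_insert hij
      have he2 : (insert i0 ({j} : Finset (Fin d))).erase j = {i0} := by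
        rw [Finset.erase_insert_of_ne (fun h => hj h.symm), Finset.erase_singleton]
        rfl
      rw [he1, he2] at hD
      have hx1 : cechExt (N := N) ω ({j} : Finset (Fin d)) = ω ⟨{j}, ht⟩ :=
        dif_pos (Finset.card_singleton j)
      have hx2 : cechExt (N := N) ω ({i0} : Finset (Fin d))
          = ω ⟨{i0}, Finset.card_singleton i0⟩ := dif_pos (Finset.card_singleton i0)
      rw [hx1, hx2] at hD
      -- hD : sgn i0 u • ρ {j} u ω_j + sgn j u • ρ {i0} u ω_i0 = 0
      have hXY := eq_neg_of_add_eq_zero_left hD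
      have hmul : cechSgn i0 (insert i0 ({j} : Finset (Fin d)))
          * cechSgn j (insert i0 ({j} : Finset (Fin d))) = -1 := by
        simpa [cechSgn] using sgn_pair_mul (a := i0) (b := j) (fun h => hj h.symm)
      have hYX : cechSgn j (insert i0 ({j} : Finset (Fin d))) •
          ρ {i0} (insert i0 {j}) (ω ⟨{i0}, Finset.card_singleton i0⟩)
          = -(cechSgn i0 (insert i0 ({j} : Finset (Fin d))) •
              ρ {j} (insert i0 {j}) (ω ⟨{j}, ht⟩)) := by
        rw [hXY, neg_neg]
      calc ρ {i0} (insert i0 {j}) (ω ⟨{i0}, Finset.card_singleton i0⟩)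
          = (cechSgn j (insert i0 ({j} : Finset (Fin d)))
            * cechSgn j (insert i0 ({j} : Finset (Fin d)))) •
              ρ {i0} (insert i0 {j}) (ω ⟨{i0}, Finset.card_singleton i0⟩) := by
            rw [sgn_sq, one_smul]
        _ = cechSgn j (insert i0 ({j} : Finset (Fin d))) •
              (cechSgn j (insert i0 ({j} : Finset (Fin d))) •
                ρ {i0} (insert i0 {j}) (ω ⟨{i0}, Finset.card_singleton i0⟩)) := by
            rw [mul_smul]
        _ = cechSgn j (insert i0 ({j} : Finset (Fin d))) •
              (-(cechSgn i0 (insert i0 ({j} : Finset (Fin d))) •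
                ρ {j} (insert i0 {j}) (ω ⟨{j}, ht⟩))) := by
            rw [hYX]
        _ = (-(cechSgn j (insert i0 ({j} : Finset (Fin d)))
            * cechSgn i0 (insert i0 ({j} : Finset (Fin d))))) •
              ρ {j} (insert i0 {j}) (ω ⟨{j}, ht⟩) := by
            rw [smul_neg, smul_smul, ← neg_smul]
        _ = ρ {j} (insert i0 {j}) (ω ⟨{j}, ht⟩) := by
            rw [mul_comm, hmul, neg_neg, one_smul]
  · rintro ⟨x, rfl⟩
    exact cech_de ρ₀ ρ hfun₀ x

end Homotopy

end Abstract

open Finset Function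

section LocLemmas

variable {R : Type} [CommRing R]

lemma smul_bij_of_dvd {Q : Type*} [AddCommGroup Q] [Module R Q] {a b : R} (hab : a ∣ b)
    (hb : Function.Bijective (fun q : Q => b • q)) :
    Function.Bijective (fun q : Q => a • q) := by
  obtain ⟨c, rfl⟩ := hab
  constructor
  · intro x y hxy
    apply hb.1
    show (a * c) • x = (a * c) • y
    rw [mul_comm, mul_smul, mul_smul]
    simp only at hxy
    rw [hxy]
  · intro q
    obtain ⟨w, hw⟩ := hb.2 q
    exact ⟨c • w, by simpa [mul_smul] using hw⟩

lemma end_isUnit_iff_smul_bij {Q : Type*} [AddCommGroup Q] [Module R Q] (r : R) :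
    IsUnit (algebraMap R (Module.End R Q) r) ↔ Function.Bijective (fun q : Q => r • q) := by
  rw [Module.End.isUnit_iff]
  have : ⇑((algebraMap R (Module.End R Q)) r) = fun q : Q => r • q :=
    funext fun q => rfl
  rw [this]

/-- powers of a divisor of an inverted element act invertibly -/
lemma map_units_powers_of_dvd {Q : Type*} [AddCommGroup Q] [Module R Q] {a b : R}
    (hab : a ∣ b)
    (hb : ∀ n : ℕ, Function.Bijective (fun q : Q => b ^ n • q)) :
    ∀ x : Submonoid.powers a, IsUnit (algebraMap R (Module.End R Q) x) := by
  rintro ⟨x, n, rfl⟩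
  rw [end_isUnit_iff_smul_bij]
  exact smul_bij_of_dvd (pow_dvd_pow_of_dvd hab n) (hb n)

lemma smul_bij_of_mem {M Q : Type*} [AddCommGroup M] [Module R M]
    [AddCommGroup Q] [Module R Q] (S : Submonoid R) (g : M →ₗ[R] Q)
    [IsLocalizedModule S g] {r : R} (hr : r ∈ S) :
    Function.Bijective (fun q : Q => r • q) := by
  rw [← end_isUnit_iff_smul_bij]
  exact IsLocalizedModule.map_units g ⟨r, hr⟩

/-- units on localized module at powers b, for a ∣ b -/
lemma map_units_powers_loc {M : Type*} [AddCommGroup M] [Module R M] {a b : R} (hab : a ∣ b) :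
    ∀ x : Submonoid.powers a,
      IsUnit (algebraMap R (Module.End R (LocalizedModule (Submonoid.powers b) M)) x) := by
  refine map_units_powers_of_dvd hab fun n => ?_
  exact smul_bij_of_mem (Submonoid.powers b)
    (LocalizedModule.mkLinearMap (Submonoid.powers b) M) ⟨n, rfl⟩

/-- composite of a localization at T ⊆ S with a localization at S is a localization at S -/
theorem isLocalizedModule_comp {A B C : Type*}
    [AddCommGroup A] [Module R A] [AddCommGroup B] [Module R B] [AddCommGroup C] [Module R C]
    (T S : Submonoid R) (hTS : ∀ x ∈ T, x ∈ S)
    (f : A →ₗ[R] B) [IsLocalizedModule T f]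
    (g : B →ₗ[R] C) [IsLocalizedModule S g] :
    IsLocalizedModule S (g ∘ₗ f) := by
  constructor
  · exact fun s => IsLocalizedModule.map_units g s
  · intro y
    obtain ⟨⟨b, u⟩, hbu⟩ := IsLocalizedModule.surj S g y
    obtain ⟨⟨a, v⟩, hav⟩ := IsLocalizedModule.surj T f b
    refine ⟨⟨a, ⟨v.1, hTS v.1 v.2⟩ * u⟩, ?_⟩
    show ((⟨v.1, hTS v.1 v.2⟩ * u : S) : R) • y = g (f a)
    have : ((⟨v.1, hTS v.1 v.2⟩ * u : S) : R) • y = (v.1 : R) • ((u : R) • y) := by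
      rw [← mul_smul]; rfl
    rw [this]
    rw [show (u : R) • y = u • y from rfl, hbu, ← map_smul]
    rw [show (v.1 : R) • b = v • b from rfl, hav]
  · intro x₁ x₂ h
    obtain ⟨c, hc⟩ := IsLocalizedModule.exists_of_eq (S := S) (f := g) h
    have hf : f ((c : R) • x₁) = f ((c : R) • x₂) := by
      rw [map_smul, map_smul]
      exact hc
    obtain ⟨e, he⟩ := IsLocalizedModule.exists_of_eq (S := T) (f := f) hf
    refine ⟨⟨e.1, hTS e.1 e.2⟩ * c, ?_⟩
    show ((e : R) * (c : R)) • x₁ = ((e : R) * (c : R)) • x₂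
    rw [mul_smul, mul_smul]
    exact he

/-- finite products of localizations are localizations -/
instance isLocalizedModule_pi {ι : Type} [Fintype ι] [DecidableEq ι] (S : Submonoid R)
    {A : ι → Type} {B : ι → Type}
    [∀ i, AddCommGroup (A i)] [∀ i, Module R (A i)]
    [∀ i, AddCommGroup (B i)] [∀ i, Module R (B i)]
    (f : ∀ i, A i →ₗ[R] B i) [∀ i, IsLocalizedModule S (f i)] :
    IsLocalizedModule S (LinearMap.pi (fun i => (f i) ∘ₗ LinearMap.proj i)) := by
  constructor
  · intro u
    rw [end_isUnit_iff_smul_bij]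
    constructor
    · intro x y hxy
      funext i
      have hi := congrFun hxy i
      simp only [Pi.smul_apply] at hi
      exact (smul_bij_of_mem S (f i) u.2).1 hi
    · intro y
      choose z hz using fun i => (smul_bij_of_mem S (f i) u.2).2 (y i)
      exact ⟨z, funext fun i => hz i⟩
  · intro y
    choose p hp using fun i => IsLocalizedModule.surj S (f i) (y i)
    refine ⟨⟨fun i => ((∏ j ∈ Finset.univ.erase i, (p j).2 : S) : R) • (p i).1,
      ∏ j : ι, (p j).2⟩, ?_⟩
    funext i
    show ((∏ j : ι, (p j).2 : S) : R) • y i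
      = f i (((∏ j ∈ Finset.univ.erase i, (p j).2 : S) : R) • (p i).1)
    rw [map_smul]
    rw [← Finset.mul_prod_erase Finset.univ _ (Finset.mem_univ i)]
    have : (((p i).2 * ∏ j ∈ Finset.univ.erase i, (p j).2 : S) : R) • y i
        = ((∏ j ∈ Finset.univ.erase i, (p j).2 : S) : R) • (((p i).2 : R) • y i) := by
      rw [← mul_smul, mul_comm]; rfl
    rw [this, show ((p i).2 : R) • y i = (p i).2 • y i from rfl, hp i]
  · intro x₁ x₂ h
    have hi : ∀ i, f i (x₁ i) = f i (x₂ i) := fun i => congrFun h i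
    choose c hc using fun i => IsLocalizedModule.exists_of_eq (S := S) (f := f i) (hi i)
    refine ⟨∏ j : ι, c j, ?_⟩
    funext i
    show ((∏ j : ι, c j : S) : R) • x₁ i = ((∏ j : ι, c j : S) : R) • x₂ i
    rw [← Finset.mul_prod_erase Finset.univ _ (Finset.mem_univ i)]
    have h1 : ∀ z : (fun i => A i) i, (((c i) * ∏ j ∈ Finset.univ.erase i, c j : S) : R) • z
        = ((∏ j ∈ Finset.univ.erase i, (c j) : S) : R) • ((c i : R) • z) := by
      intro z; rw [← mul_smul, mul_comm]; rfl
    rw [h1, h1, show (c i : R) • x₁ i = c i • x₁ i from rfl,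
      show (c i : R) • x₂ i = c i • x₂ i from rfl, hc i]

/-- a map intertwining two localizations at S is bijective -/
theorem bij_of_two_localizations {A B₁ B₂ : Type*}
    [AddCommGroup A] [Module R A] [AddCommGroup B₁] [Module R B₁] [AddCommGroup B₂] [Module R B₂]
    (S : Submonoid R) (f : A →ₗ[R] B₁) (g : A →ₗ[R] B₂)
    [IsLocalizedModule S f] [IsLocalizedModule S g]
    (h : B₁ →ₗ[R] B₂) (hh : ∀ a, h (f a) = g a) : Function.Bijective h := by
  constructor
  · intro b₁ b₁' hb
    obtain ⟨⟨a, u⟩, ha⟩ := IsLocalizedModule.surj S f b₁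
    obtain ⟨⟨a', u'⟩, ha'⟩ := IsLocalizedModule.surj S f b₁'
    have haR : (u : R) • b₁ = f a := ha
    have haR' : (u' : R) • b₁' = f a' := ha'
    have k3 : g ((u' : R) • a) = g ((u : R) • a') := by
      rw [map_smul, map_smul, ← hh a, ← hh a', ← haR, ← haR']
      rw [map_smul, map_smul, hb]
      rw [smul_comm]
    obtain ⟨c, hc⟩ := IsLocalizedModule.exists_of_eq (S := S) (f := g) k3
    have hcR : (c : R) • (u' : R) • a = (c : R) • (u : R) • a' := hc
    have k4 := congrArg f hcR
    rw [map_smul, map_smul, map_smul, map_smul, ← haR, ← haR'] at k4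
    have k5 : ((c * u' * u : S) : R) • b₁ = ((c * u' * u : S) : R) • b₁' := by
      have e1 : ((c * u' * u : S) : R) • b₁ = (c : R) • (u' : R) • (u : R) • b₁ := by
        rw [Submonoid.coe_mul, Submonoid.coe_mul, mul_smul, mul_smul]
      have e2 : ((c * u' * u : S) : R) • b₁' = (c : R) • (u : R) • (u' : R) • b₁' := by
        rw [Submonoid.coe_mul, Submonoid.coe_mul]
        rw [show (c : R) * (u' : R) * (u : R) = (c : R) * ((u : R) * (u' : R)) by ring]
        rw [mul_smul, mul_smul]
      rw [e1, e2, k4]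
    exact ((IsLocalizedModule.smul_inj f (c * u' * u)) b₁ b₁').1 k5
  · intro y
    obtain ⟨⟨b, u⟩, hby⟩ := IsLocalizedModule.surj S g y
    obtain ⟨x, hx⟩ := (smul_bij_of_mem S f u.2).2 (f b)
    have hx' : (u : R) • x = f b := hx
    refine ⟨x, (smul_bij_of_mem S g u.2).1 ?_⟩
    show (u : R) • h x = (u : R) • y
    rw [← map_smul, hx', hh, ← hby]
    rfl

end LocLemmas
section LocV
variable {R : Type} [CommRing R]

theorem isLocalizedModule_powers_mul {M : Type} [AddCommGroup M] [Module R M]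
    {a c b : R} (hb : b = a * c)
    (φ : LocalizedModule (Submonoid.powers a) M →ₗ[R] LocalizedModule (Submonoid.powers b) M)
    (hφ : ∀ m : M, φ (LocalizedModule.mkLinearMap (Submonoid.powers a) M m)
      = LocalizedModule.mkLinearMap (Submonoid.powers b) M m) :
    IsLocalizedModule (Submonoid.powers c) φ := by
  have hca : c ∣ b := ⟨a, by rw [hb, mul_comm]⟩
  have hab : a ∣ b := ⟨c, hb⟩
  have fact1 : ∀ (m : M) (n : ℕ),
      (a ^ n : R) • φ (LocalizedModule.mk m ⟨a ^ n, n, rfl⟩) = LocalizedModule.mk m 1 := by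
    intro m n
    rw [← map_smul, LocalizedModule.smul'_mk]
    have : LocalizedModule.mk ((a ^ n : R) • m) (⟨a ^ n, n, rfl⟩ : Submonoid.powers a)
        = LocalizedModule.mk m 1 := LocalizedModule.mk_cancel (⟨a ^ n, n, rfl⟩ : Submonoid.powers a) m
    rw [this]
    exact hφ m
  have hbij : ∀ n : ℕ, Function.Bijective
      (fun q : LocalizedModule (Submonoid.powers b) M => (b ^ n : R) • q) := fun n =>
    smul_bij_of_mem (Submonoid.powers b) (LocalizedModule.mkLinearMap (Submonoid.powers b) M)
      (pow_mem (Submonoid.mem_powers b) n)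
  constructor
  · exact map_units_powers_loc hca
  · -- surjectivity
    intro y
    induction y using LocalizedModule.induction_on with
    | h m u =>
      obtain ⟨-, n, rfl⟩ := u
      refine ⟨⟨LocalizedModule.mk m ⟨a ^ n, n, rfl⟩,
        ⟨c ^ n, pow_mem (Submonoid.mem_powers c) n⟩⟩, ?_⟩
      apply (smul_bij_of_dvd (pow_dvd_pow_of_dvd hab n) (hbij n)).1
      show (a ^ n : R) • ((c ^ n : R) • LocalizedModule.mk m (⟨b ^ n, n, rfl⟩ : Submonoid.powers b))
        = (a ^ n : R) • φ (LocalizedModule.mk m ⟨a ^ n, n, rfl⟩)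
      rw [fact1 m n, smul_smul, ← mul_pow, ← hb, LocalizedModule.smul'_mk]
      exact LocalizedModule.mk_cancel (⟨b ^ n, n, rfl⟩ : Submonoid.powers b) m
  · -- exists_of_eq
    intro x₁ x₂ h
    induction x₁ using LocalizedModule.induction_on with
    | h m₁ u =>
      induction x₂ using LocalizedModule.induction_on with
      | h m₂ v =>
        obtain ⟨-, n, rfl⟩ := u
        obtain ⟨-, n', rfl⟩ := v
        have h2 := congrArg (fun q => (a ^ (n + n') : R) • q) h
        simp only at h2
        rw [show (a ^ (n + n') : R) • φ (LocalizedModule.mk m₁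
              (⟨a ^ n, n, rfl⟩ : Submonoid.powers a))
            = (a ^ n' : R) • ((a ^ n : R) • φ (LocalizedModule.mk m₁
              (⟨a ^ n, n, rfl⟩ : Submonoid.powers a))) by
          rw [smul_smul, ← pow_add, add_comm],
          show (a ^ (n + n') : R) • φ (LocalizedModule.mk m₂
              (⟨a ^ n', n', rfl⟩ : Submonoid.powers a))
            = (a ^ n : R) • ((a ^ n' : R) • φ (LocalizedModule.mk m₂
              (⟨a ^ n', n', rfl⟩ : Submonoid.powers a))) by
          rw [smul_smul, ← pow_add]] at h2
        rw [fact1 m₁ n, fact1 m₂ n', LocalizedModule.smul'_mk, LocalizedModule.smul'_mk] at h2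
        obtain ⟨w, hw⟩ := LocalizedModule.mk_eq.1 h2
        obtain ⟨-, l, rfl⟩ := w
        simp only [one_smul] at hw
        have hw' : (b ^ l : R) • ((a ^ n' : R) • m₁) = (b ^ l : R) • ((a ^ n : R) • m₂) := hw
        refine ⟨⟨c ^ (l + n + n'), pow_mem (Submonoid.mem_powers c) _⟩, ?_⟩
        show (c ^ (l + n + n') : R) • LocalizedModule.mk m₁
            (⟨a ^ n, n, rfl⟩ : Submonoid.powers a)
          = (c ^ (l + n + n') : R) • LocalizedModule.mk m₂
            (⟨a ^ n', n', rfl⟩ : Submonoid.powers a)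
        rw [LocalizedModule.smul'_mk, LocalizedModule.smul'_mk]
        refine LocalizedModule.mk_eq.2 ⟨(⟨a ^ l, l, rfl⟩ : Submonoid.powers a), ?_⟩
        show (a ^ l : R) • ((a ^ n' : R) • ((c ^ (l + n + n') : R) • m₁))
          = (a ^ l : R) • ((a ^ n : R) • ((c ^ (l + n + n') : R) • m₂))
        calc (a ^ l : R) • ((a ^ n' : R) • ((c ^ (l + n + n') : R) • m₁))
            = (c ^ (n + n') : R) • ((b ^ l : R) • ((a ^ n' : R) • m₁)) := by
              rw [smul_smul, smul_smul, smul_smul, smul_smul]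
              congr 1
              rw [hb]; ring
          _ = (c ^ (n + n') : R) • ((b ^ l : R) • ((a ^ n : R) • m₂)) := by rw [hw']
          _ = (a ^ l : R) • ((a ^ n : R) • ((c ^ (l + n + n') : R) • m₂)) := by
              rw [smul_smul, smul_smul, smul_smul, smul_smul]
              congr 1
              rw [hb]; ring

end LocV
section MainAux

variable {R : Type} [CommRing R]

/-- the localization of a pi-module at a prime -/
noncomputable def cechFP {d : ℕ} (s : Fin d → R) (M : Type) [AddCommGroup M] [Module R M]
    (P : Ideal R) [P.IsPrime] (k : ℕ) :
    ((t : {t : Finset (Fin d) // t.card = k}) →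
        LocalizedModule (Submonoid.powers (t.1.prod s)) M) →ₗ[R]
      ((t : {t : Finset (Fin d) // t.card = k}) →
        LocalizedModule P.primeCompl (LocalizedModule (Submonoid.powers (t.1.prod s)) M)) :=
  LinearMap.pi fun t =>
    (LocalizedModule.mkLinearMap P.primeCompl
      (LocalizedModule (Submonoid.powers (t.1.prod s)) M)) ∘ₗ LinearMap.proj t

instance cechFP_isLocalizedModule {d : ℕ} (s : Fin d → R) (M : Type)
    [AddCommGroup M] [Module R M] (P : Ideal R) [P.IsPrime] (k : ℕ) :
    IsLocalizedModule P.primeCompl (cechFP s M P k) :=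
  isLocalizedModule_pi P.primeCompl _

lemma cechFP_apply {d : ℕ} (s : Fin d → R) (M : Type) [AddCommGroup M] [Module R M]
    (P : Ideal R) [P.IsPrime] (k : ℕ)
    (ω : (t : {t : Finset (Fin d) // t.card = k}) →
      LocalizedModule (Submonoid.powers (t.1.prod s)) M)
    (t : {t : Finset (Fin d) // t.card = k}) :
    cechFP s M P k ω t = LocalizedModule.mkLinearMap P.primeCompl
      (LocalizedModule (Submonoid.powers (t.1.prod s)) M) (ω t) := rfl

end MainAux
section Master

theorem cech_master (R : Type) [CommRing R] (d : ℕ) (s : Fin d → R)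
    (hs : Ideal.span (Set.range s) = ⊤)
    (M : Type) [AddCommGroup M] [Module R M]
    (φ : ∀ t t' : Finset (Fin d),
      LocalizedModule (Submonoid.powers (t.prod s)) M →ₗ[R]
        LocalizedModule (Submonoid.powers (t'.prod s)) M)
    (hφ : ∀ t t' : Finset (Fin d), t ⊆ t' → ∀ m : M,
      φ t t' (LocalizedModule.mkLinearMap (Submonoid.powers (t.prod s)) M m) =
        LocalizedModule.mkLinearMap (Submonoid.powers (t'.prod s)) M m)
    (e : M →ₗ[R] ∀ t : {t : Finset (Fin d) // t.card = 1},
      LocalizedModule (Submonoid.powers (t.1.prod s)) M)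
    (he : ∀ (m : M) (t : {t : Finset (Fin d) // t.card = 1}),
      e m t = LocalizedModule.mkLinearMap (Submonoid.powers (t.1.prod s)) M m)
    (D : ∀ k : ℕ,
      ((t : {t : Finset (Fin d) // t.card = k + 1}) →
          LocalizedModule (Submonoid.powers (t.1.prod s)) M) →ₗ[R]
        ((t : {t : Finset (Fin d) // t.card = k + 2}) →
          LocalizedModule (Submonoid.powers (t.1.prod s)) M))
    (hD : ∀ (k : ℕ)
      (ω : (t : {t : Finset (Fin d) // t.card = k + 1}) →
          LocalizedModule (Submonoid.powers (t.1.prod s)) M)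
      (t : {t : Finset (Fin d) // t.card = k + 2}),
      D k ω t = ∑ j ∈ t.1.attach,
        ((-1 : ℤ) ^ (t.1.filter (fun i => i < j.1)).card) •
          φ (t.1.erase j.1) t.1 (ω ⟨t.1.erase j.1, by
            simp [Finset.card_erase_of_mem j.2, t.2]⟩))
    (P : Ideal R) [hPm : P.IsMaximal] :
    Function.Injective (IsLocalizedModule.map P.primeCompl
        (LocalizedModule.mkLinearMap P.primeCompl M) (cechFP s M P 1) e) ∧
    Function.Exact (IsLocalizedModule.map P.primeCompl
        (LocalizedModule.mkLinearMap P.primeCompl M) (cechFP s M P 1) e)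
      (IsLocalizedModule.map P.primeCompl (cechFP s M P 1) (cechFP s M P 2) (D 0)) ∧
    ∀ k : ℕ, Function.Exact
      (IsLocalizedModule.map P.primeCompl (cechFP s M P (k+1)) (cechFP s M P (k+2)) (D k))
      (IsLocalizedModule.map P.primeCompl (cechFP s M P (k+2)) (cechFP s M P (k+3))
        (D (k+1))) := by
  classical
  -- the functoriality of φ
  have hcomp : ∀ t t' t'' : Finset (Fin d), t ⊆ t' → t' ⊆ t'' →
      (φ t' t'') ∘ₗ (φ t t') = φ t t'' := by
    intro t t' t'' h1 h2
    refine IsLocalizedModule.ext (Submonoid.powers (t.prod s))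
      (LocalizedModule.mkLinearMap (Submonoid.powers (t.prod s)) M)
      (map_units_powers_loc (Finset.prod_dvd_prod_of_subset t t'' s (h1.trans h2))) ?_
    refine LinearMap.ext fun m => ?_
    simp only [LinearMap.coe_comp, Function.comp_apply]
    rw [hφ t t' h1 m, hφ t' t'' h2 m, hφ t t'' (h1.trans h2) m]
  -- choose i0 not in P
  obtain ⟨i0, hi0⟩ : ∃ i, s i ∉ P := by
    by_contra hc
    push_neg at hc
    have hle : Ideal.span (Set.range s) ≤ P :=
      Ideal.span_le.2 (by rintro x ⟨i, rfl⟩; exact hc i)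
    rw [hs] at hle
    exact hPm.ne_top (top_le_iff.1 hle)
  have hi0' : s i0 ∈ P.primeCompl := hi0
  -- the localized family
  set ρ₀P : ∀ t : Finset (Fin d), LocalizedModule P.primeCompl M →ₗ[R]
      LocalizedModule P.primeCompl (LocalizedModule (Submonoid.powers (t.prod s)) M) :=
    fun t => IsLocalizedModule.map P.primeCompl
      (LocalizedModule.mkLinearMap P.primeCompl M)
      (LocalizedModule.mkLinearMap P.primeCompl
        (LocalizedModule (Submonoid.powers (t.prod s)) M))
      (LocalizedModule.mkLinearMap (Submonoid.powers (t.prod s)) M) with hρ₀P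
  set ρP : ∀ t t' : Finset (Fin d),
      LocalizedModule P.primeCompl (LocalizedModule (Submonoid.powers (t.prod s)) M) →ₗ[R]
      LocalizedModule P.primeCompl (LocalizedModule (Submonoid.powers (t'.prod s)) M) :=
    fun t t' => IsLocalizedModule.map P.primeCompl
      (LocalizedModule.mkLinearMap P.primeCompl
        (LocalizedModule (Submonoid.powers (t.prod s)) M))
      (LocalizedModule.mkLinearMap P.primeCompl
        (LocalizedModule (Submonoid.powers (t'.prod s)) M))
      (φ t t') with hρP
  -- functoriality of the localized family
  have hfunP : ∀ t t' t'' : Finset (Fin d), t ⊆ t' → t' ⊆ t'' →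
      ∀ x, ρP t' t'' (ρP t t' x) = ρP t t'' x := by
    intro t t' t'' h1 h2 x
    have hmc := IsLocalizedModule.map_comp' P.primeCompl
      (LocalizedModule.mkLinearMap P.primeCompl
        (LocalizedModule (Submonoid.powers (t.prod s)) M))
      (LocalizedModule.mkLinearMap P.primeCompl
        (LocalizedModule (Submonoid.powers (t'.prod s)) M))
      (LocalizedModule.mkLinearMap P.primeCompl
        (LocalizedModule (Submonoid.powers (t''.prod s)) M))
      (φ t t') (φ t' t'')
    rw [hcomp t t' t'' h1 h2] at hmc
    show (ρP t' t'' ∘ₗ ρP t t') x = ρP t t'' x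
    rw [hρP, ← hmc]
  have hfun₀P : ∀ t t' : Finset (Fin d), t ⊆ t' →
      ∀ x, ρP t t' (ρ₀P t x) = ρ₀P t' x := by
    intro t t' h1 x
    have hmc := IsLocalizedModule.map_comp' P.primeCompl
      (LocalizedModule.mkLinearMap P.primeCompl M)
      (LocalizedModule.mkLinearMap P.primeCompl
        (LocalizedModule (Submonoid.powers (t.prod s)) M))
      (LocalizedModule.mkLinearMap P.primeCompl
        (LocalizedModule (Submonoid.powers (t'.prod s)) M))
      (LocalizedModule.mkLinearMap (Submonoid.powers (t.prod s)) M) (φ t t')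
    rw [show (φ t t') ∘ₗ (LocalizedModule.mkLinearMap (Submonoid.powers (t.prod s)) M)
        = LocalizedModule.mkLinearMap (Submonoid.powers (t'.prod s)) M from
      LinearMap.ext fun m => hφ t t' h1 m] at hmc
    show (ρP t t' ∘ₗ ρ₀P t) x = ρ₀P t' x
    rw [hρP, hρ₀P, ← hmc]
  -- bijectivity after inserting i0
  have hbijP : ∀ t : Finset (Fin d), i0 ∉ t →
      Function.Bijective (ρP t (insert i0 t)) := by
    intro t hit
    haveI instV : IsLocalizedModule (Submonoid.powers (s i0)) (φ t (insert i0 t)) :=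
      isLocalizedModule_powers_mul
        (by rw [Finset.prod_insert hit]; ring) (φ t (insert i0 t))
        (hφ t (insert i0 t) (Finset.subset_insert _ _))
    haveI instComp : IsLocalizedModule P.primeCompl
        ((LocalizedModule.mkLinearMap P.primeCompl
          (LocalizedModule (Submonoid.powers ((insert i0 t).prod s)) M)) ∘ₗ
          φ t (insert i0 t)) :=
      isLocalizedModule_comp (Submonoid.powers (s i0)) P.primeCompl
        (fun x hx => by
          obtain ⟨n, rfl⟩ := hx
          exact pow_mem hi0' n) _ _
    refine bij_of_two_localizations P.primeCompl
      (LocalizedModule.mkLinearMap P.primeCompl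
        (LocalizedModule (Submonoid.powers (t.prod s)) M))
      ((LocalizedModule.mkLinearMap P.primeCompl
        (LocalizedModule (Submonoid.powers ((insert i0 t).prod s)) M)) ∘ₗ
        φ t (insert i0 t))
      (ρP t (insert i0 t)) (fun a => ?_)
    rw [hρP]
    exact IsLocalizedModule.map_apply _ _ _ _ _
  have hbij₀P : Function.Bijective (ρ₀P ({i0} : Finset (Fin d))) := by
    haveI instComp : IsLocalizedModule P.primeCompl
        ((LocalizedModule.mkLinearMap P.primeCompl
          (LocalizedModule (Submonoid.powers (({i0} : Finset (Fin d)).prod s)) M)) ∘ₗ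
          LocalizedModule.mkLinearMap (Submonoid.powers (({i0} : Finset (Fin d)).prod s)) M) :=
      isLocalizedModule_comp (Submonoid.powers (({i0} : Finset (Fin d)).prod s)) P.primeCompl
        (fun x hx => by
          obtain ⟨n, rfl⟩ := hx
          refine pow_mem ?_ n
          rw [Finset.prod_singleton]
          exact hi0') _ _
    refine bij_of_two_localizations P.primeCompl
      (LocalizedModule.mkLinearMap P.primeCompl M)
      ((LocalizedModule.mkLinearMap P.primeCompl
        (LocalizedModule (Submonoid.powers (({i0} : Finset (Fin d)).prod s)) M)) ∘ₗ
        LocalizedModule.mkLinearMap (Submonoid.powers (({i0} : Finset (Fin d)).prod s)) M)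
      (ρ₀P {i0}) (fun a => ?_)
    rw [hρ₀P]
    exact IsLocalizedModule.map_apply _ _ _ _ _
  -- identification of the localized maps
  have hE : IsLocalizedModule.map P.primeCompl
      (LocalizedModule.mkLinearMap P.primeCompl M) (cechFP s M P 1) e = cechE ρ₀P := by
    refine IsLocalizedModule.ext P.primeCompl
      (LocalizedModule.mkLinearMap P.primeCompl M)
      (IsLocalizedModule.map_units (cechFP s M P 1)) ?_
    refine LinearMap.ext fun m => ?_
    rw [LinearMap.comp_apply, LinearMap.comp_apply, IsLocalizedModule.map_apply]
    funext t
    rw [cechFP_apply, he m t, cechE_apply, hρ₀P]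
    exact (IsLocalizedModule.map_apply _ _ _ _ _).symm
  have hDk : ∀ k : ℕ, IsLocalizedModule.map P.primeCompl
      (cechFP s M P (k+1)) (cechFP s M P (k+2)) (D k) = cechD ρP k := by
    intro k
    refine IsLocalizedModule.ext P.primeCompl (cechFP s M P (k+1))
      (IsLocalizedModule.map_units (cechFP s M P (k+2))) ?_
    refine LinearMap.ext fun ω => ?_
    rw [LinearMap.comp_apply, LinearMap.comp_apply, IsLocalizedModule.map_apply]
    funext tt
    rw [cechFP_apply, hD k ω tt, map_sum]
    simp only [cechD, LinearMap.coe_mk, AddHom.coe_mk]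
    refine Finset.sum_congr rfl fun j _ => ?_
    rw [map_zsmul]
    congr 1
    rw [cechFP_apply, hρP, IsLocalizedModule.map_apply]
  refine ⟨?_, ?_, ?_⟩
  · rw [hE]
    exact cech_e_inj ρ₀P i0 hbij₀P
  · have h2 := cech_exact_zero ρ₀P ρP i0 hfunP hfun₀P hbijP hbij₀P
    rw [← hE, ← hDk 0] at h2
    exact h2
  · intro k
    have h3 := cech_exact_higher ρP i0 hfunP hbijP k
    rw [← hDk k, ← hDk (k+1)] at h3
    exact h3

end Master
theorem cech_coresolution_exact (R : Type) [CommRing R] (d : ℕ) (s : Fin d → R)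
    (hs : Ideal.span (Set.range s) = ⊤)
    (M : Type) [AddCommGroup M] [Module R M]
    (φ : ∀ t t' : Finset (Fin d),
      LocalizedModule (Submonoid.powers (t.prod s)) M →ₗ[R]
        LocalizedModule (Submonoid.powers (t'.prod s)) M)
    (hφ : ∀ t t' : Finset (Fin d), t ⊆ t' → ∀ m : M,
      φ t t' (LocalizedModule.mkLinearMap (Submonoid.powers (t.prod s)) M m) =
        LocalizedModule.mkLinearMap (Submonoid.powers (t'.prod s)) M m)
    (e : M →ₗ[R] ∀ t : {t : Finset (Fin d) // t.card = 1},
      LocalizedModule (Submonoid.powers (t.1.prod s)) M)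
    (he : ∀ (m : M) (t : {t : Finset (Fin d) // t.card = 1}),
      e m t = LocalizedModule.mkLinearMap (Submonoid.powers (t.1.prod s)) M m)
    (D : ∀ k : ℕ,
      ((t : {t : Finset (Fin d) // t.card = k + 1}) →
          LocalizedModule (Submonoid.powers (t.1.prod s)) M) →ₗ[R]
        ((t : {t : Finset (Fin d) // t.card = k + 2}) →
          LocalizedModule (Submonoid.powers (t.1.prod s)) M))
    (hD : ∀ (k : ℕ)
      (ω : (t : {t : Finset (Fin d) // t.card = k + 1}) →
          LocalizedModule (Submonoid.powers (t.1.prod s)) M)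
      (t : {t : Finset (Fin d) // t.card = k + 2}),
      D k ω t = ∑ j ∈ t.1.attach,
        ((-1 : ℤ) ^ (t.1.filter (fun i => i < j.1)).card) •
          φ (t.1.erase j.1) t.1 (ω ⟨t.1.erase j.1, by
            simp [Finset.card_erase_of_mem j.2, t.2]⟩)) :
    Function.Injective e ∧ Function.Exact e (D 0) ∧
      ∀ k : ℕ, Function.Exact (D k) (D (k + 1)) := by
  refine ⟨?_, ?_, ?_⟩
  · exact injective_of_isLocalized_maximal
      (fun P _ => LocalizedModule P.primeCompl M)
      (fun P _ => LocalizedModule.mkLinearMap P.primeCompl M)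
      (fun P _ => (t : {t : Finset (Fin d) // t.card = 1}) →
        LocalizedModule P.primeCompl (LocalizedModule (Submonoid.powers (t.1.prod s)) M))
      (fun P _ => cechFP s M P 1)
      e
      (fun P hP => (cech_master R d s hs M φ hφ e he D hD P).1)
  · exact exact_of_isLocalized_maximal
      (fun P _ => LocalizedModule P.primeCompl M)
      (fun P _ => LocalizedModule.mkLinearMap P.primeCompl M)
      (fun P _ => (t : {t : Finset (Fin d) // t.card = 1}) →
        LocalizedModule P.primeCompl (LocalizedModule (Submonoid.powers (t.1.prod s)) M))
      (fun P _ => cechFP s M P 1)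
      (fun P _ => (t : {t : Finset (Fin d) // t.card = 2}) →
        LocalizedModule P.primeCompl (LocalizedModule (Submonoid.powers (t.1.prod s)) M))
      (fun P _ => cechFP s M P 2)
      e (D 0)
      (fun P hP => (cech_master R d s hs M φ hφ e he D hD P).2.1)
  · intro k
    exact exact_of_isLocalized_maximal
      (fun P _ => (t : {t : Finset (Fin d) // t.card = k + 1}) →
        LocalizedModule P.primeCompl (LocalizedModule (Submonoid.powers (t.1.prod s)) M))
      (fun P _ => cechFP s M P (k + 1))
      (fun P _ => (t : {t : Finset (Fin d) // t.card = k + 2}) →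
        LocalizedModule P.primeCompl (LocalizedModule (Submonoid.powers (t.1.prod s)) M))
      (fun P _ => cechFP s M P (k + 2))
      (fun P _ => (t : {t : Finset (Fin d) // t.card = k + 3}) →
        LocalizedModule P.primeCompl (LocalizedModule (Submonoid.powers (t.1.prod s)) M))
      (fun P _ => cechFP s M P (k + 3))
      (D k) (D (k + 1))
      (fun P hP => (cech_master R d s hs M φ hφ e he D hD P).2.2 k)
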